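/- arXiv:2512.01621 — 5 statements merged into one kernel-verified Lean document; each statement's English description precedes it below -/
import Mathlib

section
/- Let g : [0,∞) → ℝ be defined by g(0) := 1 and g(x) := 0 for x > 0. For every γ ≥ 0 there exists a constant C > 0 such that for every t > 0 and every square-summable real sequence (c_j)_{j∈ℕ}: ( Σ_{j=0}^∞ j^{4γ} e^{−2 j⁴ t} c_j² )^{1/2} ≤ C ( t^{−γ/2} e^{−t/2} ( Σ_{j=0}^∞ c_j² )^{1/2} + g(γ) |c_0| ), with the convention 0⁰ = 1 (so for γ = 0 the j = 0 term on the left equals c_0²). -/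
open Real

/-- `g(0) = 1` and `g(x) = 0` for `x > 0`. -/
noncomputable def gfun : ℝ → ℝ := fun x => if x = 0 then 1 else 0

lemma rpow_mul_exp_neg_le (γ : ℝ) (hγ : 0 ≤ γ) (x : ℝ) (hx : 0 ≤ x) :
    x ^ γ * Real.exp (-x) ≤ Nat.factorial (Nat.ceil γ) := by
  rcases le_or_gt x 1 with h1 | h1
  · have h2 : x ^ γ ≤ 1 := Real.rpow_le_one hx h1 hγ
    have h3 : Real.exp (-x) ≤ 1 := Real.exp_le_one_iff.mpr (by linarith)
    have h4 : (1:ℝ) ≤ Nat.factorial (Nat.ceil γ) := by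
      exact_mod_cast Nat.one_le_iff_ne_zero.mpr (Nat.factorial_ne_zero _)
    nlinarith [Real.exp_pos (-x), Real.rpow_nonneg hx γ]
  · have h2 : x ^ γ ≤ x ^ ((Nat.ceil γ : ℝ)) :=
      Real.rpow_le_rpow_of_exponent_le h1.le (Nat.le_ceil γ)
    have h3 : x ^ ((Nat.ceil γ : ℝ)) = x ^ (Nat.ceil γ) := by
      rw [Real.rpow_natCast]
    have h4 : x ^ (Nat.ceil γ) / Nat.factorial (Nat.ceil γ) ≤ Real.exp x :=
      Real.pow_div_factorial_le_exp x hx _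
    have hf : (0:ℝ) < Nat.factorial (Nat.ceil γ) := by exact_mod_cast Nat.factorial_pos _
    have h5 : x ^ (Nat.ceil γ) ≤ Nat.factorial (Nat.ceil γ) * Real.exp x := by
      rw [div_le_iff₀ hf] at h4; linarith [h4]
    have h6 : x ^ γ * Real.exp (-x) ≤ (Nat.factorial (Nat.ceil γ) * Real.exp x) * Real.exp (-x) := by
      have := Real.exp_pos (-x)
      rw [h3] at h2
      nlinarith
    rwa [mul_assoc, ← Real.exp_add, add_neg_cancel, Real.exp_zero, mul_one] at h6

lemma sqrt_add_le' (x y : ℝ) (hx : 0 ≤ x) (hy : 0 ≤ y) :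
    Real.sqrt (x + y) ≤ Real.sqrt x + Real.sqrt y := by
  have h : x + y ≤ (Real.sqrt x + Real.sqrt y) ^ 2 := by
    have hx' := Real.sq_sqrt hx
    have hy' := Real.sq_sqrt hy
    nlinarith [Real.sqrt_nonneg x, Real.sqrt_nonneg y]
  calc Real.sqrt (x + y) ≤ Real.sqrt ((Real.sqrt x + Real.sqrt y) ^ 2) := Real.sqrt_le_sqrt h
    _ = Real.sqrt x + Real.sqrt y := Real.sqrt_sq (by positivity)

set_option maxHeartbeats 1000000 in
/-- Smoothing estimate for the Cahn–Hilliard semigroup in Fourier-coefficient form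
(first inequality of Lemma 2.1). -/
theorem stmt0 (γ : ℝ) (hγ : 0 ≤ γ) :
    ∃ C : ℝ, 0 < C ∧ ∀ t : ℝ, 0 < t → ∀ c : ℕ → ℝ, Summable (fun j : ℕ => (c j) ^ 2) →
      Real.sqrt (∑' j : ℕ, (j : ℝ) ^ (4 * γ) * Real.exp (-2 * (j : ℝ) ^ 4 * t) * (c j) ^ 2)
        ≤ C * (t ^ (-γ / 2) * Real.exp (-t / 2) * Real.sqrt (∑' j : ℕ, (c j) ^ 2)
            + gfun γ * |c 0|) := by
  set M : ℝ := (Nat.factorial (Nat.ceil γ) : ℝ) with hM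
  have hM1 : (1:ℝ) ≤ M := by
    rw [hM]
    exact_mod_cast Nat.one_le_iff_ne_zero.mpr (Nat.factorial_ne_zero _)
  refine ⟨Real.sqrt M + 1, by positivity, ?_⟩
  intro t ht c hc
  set f : ℕ → ℝ := fun j => (j : ℝ) ^ (4 * γ) * Real.exp (-2 * (j : ℝ) ^ 4 * t) * (c j) ^ 2
    with hf
  set K : ℝ := M * t ^ (-γ) * Real.exp (-t) with hK
  have hKpos : 0 < K := by
    have := Real.rpow_pos_of_pos ht (-γ)
    have := Real.exp_pos (-t)
    positivity
  -- per-term bound for j ≥ 1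
  have hterm : ∀ n : ℕ, f (n + 1) ≤ K * (c (n + 1)) ^ 2 := by
    intro n
    set j : ℕ := n + 1
    have hj1 : (1:ℝ) ≤ (j:ℝ) := by exact_mod_cast Nat.one_le_iff_ne_zero.mpr (by omega)
    have hj0 : (0:ℝ) ≤ (j:ℝ) := by linarith
    set y : ℝ := (j:ℝ) ^ 4 * t with hy
    have hsq : (1:ℝ) ≤ (j:ℝ) ^ 2 := by nlinarith
    have h14 : (1:ℝ) ≤ (j:ℝ) ^ 4 := by nlinarith
    have hy1 : t ≤ y := by rw [hy]; nlinarith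
    have hy0 : 0 ≤ y := by linarith [ht.le]
    have key : y ^ γ * Real.exp (-y) ≤ M := rpow_mul_exp_neg_le γ hγ y hy0
    have hpow : (j:ℝ) ^ (4 * γ) = y ^ γ * t ^ (-γ) := by
      have h1 : (j:ℝ) ^ (4 * γ) = ((j:ℝ) ^ (4:ℝ)) ^ γ := Real.rpow_mul hj0 4 γ
      have h2 : ((j:ℝ) ^ (4:ℝ)) = (j:ℝ) ^ (4:ℕ) := by
        rw [← Real.rpow_natCast (j:ℝ) 4]; norm_num
      have h3 : (j:ℝ) ^ (4:ℕ) = y / t := by field_simp [hy]; exact hy.symm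
      rw [h1, h2, h3, Real.div_rpow hy0 ht.le, Real.rpow_neg ht.le, div_eq_mul_inv]
    have hexp : Real.exp (-2 * (j:ℝ) ^ 4 * t) = Real.exp (-y) * Real.exp (-y) := by
      rw [← Real.exp_add]; ring_nf; rw [hy]
    have hexp2 : Real.exp (-y) ≤ Real.exp (-t) := Real.exp_le_exp.mpr (by linarith)
    have : f j ≤ K * (c j) ^ 2 := by
      rw [hf]; dsimp only
      rw [hpow, hexp, hK]
      have e1 : 0 < Real.exp (-y) := Real.exp_pos _
      have e2 : 0 < t ^ (-γ) := Real.rpow_pos_of_pos ht _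
      have hA : (y ^ γ * Real.exp (-y)) * Real.exp (-y) ≤ M * Real.exp (-t) :=
        mul_le_mul key hexp2 e1.le (by linarith)
      nlinarith [mul_le_mul_of_nonneg_right hA (mul_nonneg e2.le (sq_nonneg (c j)))]
    exact this
  have hfnonneg : ∀ j, 0 ≤ f j := by
    intro j
    have : 0 ≤ (j:ℝ) ^ (4 * γ) := Real.rpow_nonneg (Nat.cast_nonneg j) _
    have := Real.exp_pos (-2 * (j:ℝ) ^ 4 * t)
    positivity
  have hcshift : Summable (fun n : ℕ => (c (n + 1)) ^ 2) := (summable_nat_add_iff 1).mpr hc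
  have hfshift : Summable (fun n : ℕ => f (n + 1)) :=
    Summable.of_nonneg_of_le (fun n => hfnonneg _) hterm (hcshift.mul_left K)
  have hfsum : Summable f := (summable_nat_add_iff 1).mp hfshift
  have hf0 : f 0 = gfun γ * (c 0) ^ 2 := by
    rw [hf]; dsimp only
    norm_num
    by_cases h : γ = 0
    · simp [gfun, h]
    · rw [Real.zero_rpow (by positivity : 4 * γ ≠ 0)]
      simp [gfun, h]
  have hsum0 : ∑' j, f j = f 0 + ∑' n, f (n + 1) := Summable.tsum_eq_zero_add hfsum
  have hcsum0 : ∑' j, (c j) ^ 2 = (c 0) ^ 2 + ∑' n, (c (n + 1)) ^ 2 := Summable.tsum_eq_zero_add hc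
  have hshiftle : ∑' n, f (n + 1) ≤ K * ∑' j, (c j) ^ 2 := by
    calc ∑' n, f (n + 1) ≤ ∑' n, K * (c (n + 1)) ^ 2 :=
          Summable.tsum_le_tsum hterm hfshift (hcshift.mul_left K)
      _ = K * ∑' n, (c (n + 1)) ^ 2 := tsum_mul_left
      _ ≤ K * ∑' j, (c j) ^ 2 := by
          rw [hcsum0]; nlinarith [sq_nonneg (c 0), hKpos]
  have hgnn : 0 ≤ gfun γ := by unfold gfun; split <;> norm_num
  have hS : ∑' j, f j ≤ gfun γ * (c 0) ^ 2 + K * ∑' j, (c j) ^ 2 := by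
    rw [hsum0, hf0]; linarith
  have hcnn : 0 ≤ ∑' j, (c j) ^ 2 := tsum_nonneg (fun j => sq_nonneg _)
  have step1 : Real.sqrt (∑' j, f j)
      ≤ Real.sqrt (gfun γ * (c 0) ^ 2) + Real.sqrt (K * ∑' j, (c j) ^ 2) := by
    calc Real.sqrt (∑' j, f j)
        ≤ Real.sqrt (gfun γ * (c 0) ^ 2 + K * ∑' j, (c j) ^ 2) := Real.sqrt_le_sqrt hS
      _ ≤ _ := sqrt_add_le' _ _ (by positivity) (by positivity)
  have hsg : Real.sqrt (gfun γ * (c 0) ^ 2) = gfun γ * |c 0| := by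
    unfold gfun; split
    · simp [Real.sqrt_sq_eq_abs]
    · simp
  have hsK : Real.sqrt (K * ∑' j, (c j) ^ 2)
      = Real.sqrt M * (t ^ (-γ / 2) * Real.exp (-t / 2) * Real.sqrt (∑' j, (c j) ^ 2)) := by
    have e2 : 0 ≤ t ^ (-γ) := (Real.rpow_pos_of_pos ht _).le
    have s1 : Real.sqrt (t ^ (-γ)) = t ^ (-γ / 2) := by
      rw [Real.sqrt_eq_rpow, ← Real.rpow_mul ht.le]
      congr 1; ring
    have s2 : Real.sqrt (Real.exp (-t)) = Real.exp (-t / 2) := by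
      have : Real.exp (-t) = (Real.exp (-t / 2)) ^ 2 := by
        rw [sq, ← Real.exp_add]; ring_nf
      rw [this, Real.sqrt_sq (Real.exp_nonneg _)]
    have hMnn : (0:ℝ) ≤ M := by linarith
    rw [hK, Real.sqrt_mul (by positivity : (0:ℝ) ≤ M * t ^ (-γ) * Real.exp (-t)),
      Real.sqrt_mul (by positivity : (0:ℝ) ≤ M * t ^ (-γ)),
      Real.sqrt_mul hMnn, s1, s2]
    ring
  have hXnn : 0 ≤ t ^ (-γ / 2) * Real.exp (-t / 2) * Real.sqrt (∑' j, (c j) ^ 2) := by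
    have := (Real.rpow_pos_of_pos ht (-γ / 2)).le
    positivity
  have hGnn : 0 ≤ gfun γ * |c 0| := mul_nonneg hgnn (abs_nonneg _)
  have hsM : 0 ≤ Real.sqrt M := Real.sqrt_nonneg _
  calc Real.sqrt (∑' j, f j)
      ≤ Real.sqrt (gfun γ * (c 0) ^ 2) + Real.sqrt (K * ∑' j, (c j) ^ 2) := step1
    _ = gfun γ * |c 0|
        + Real.sqrt M * (t ^ (-γ / 2) * Real.exp (-t / 2) * Real.sqrt (∑' j, (c j) ^ 2)) := by
        rw [hsg, hsK]
    _ ≤ (Real.sqrt M + 1) * (t ^ (-γ / 2) * Real.exp (-t / 2) * Real.sqrt (∑' j, (c j) ^ 2)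
        + gfun γ * |c 0|) := by nlinarith
end

section
/- Let g : [0,∞) → ℝ be defined by g(0) := 1 and g(x) := 0 for x > 0. For all γ₁, γ₂ ≥ 0 and γ₃ ∈ [0,1) with γ₁ − γ₂ + 2γ₃ > 0, there exists a constant C > 0 such that for all s, t > 0 and every real sequence (c_j)_{j∈ℕ} with Σ_{j=0}^∞ j^{4γ₂} c_j² < ∞: ( Σ_{j=0}^∞ j^{4γ₁} e^{−2 j⁴ t} (1 − e^{−j⁴ s})² c_j² )^{1/2} ≤ C ( t^{−(γ₁−γ₂+2γ₃)/2} s^{γ₃} e^{−t/2} ( Σ_{j=0}^∞ j^{4γ₂} c_j² )^{1/2} + g(γ₁) |c_0| ), with the convention 0⁰ = 1. -/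
open Real

lemma rpow_le_const_mul_exp (α : ℝ) (hα : 0 < α) :
    ∃ M : ℝ, 1 ≤ M ∧ ∀ y : ℝ, 0 ≤ y → y ^ α ≤ M * Real.exp y := by
  refine ⟨max 1 (Nat.factorial (Nat.ceil α) : ℝ), le_max_left _ _, fun y hy => ?_⟩
  have hexp : (1:ℝ) ≤ Real.exp y := Real.one_le_exp hy
  rcases le_total y 1 with h | h
  · calc y ^ α ≤ 1 ^ α := Real.rpow_le_rpow hy h hα.le
      _ = 1 := Real.one_rpow α
      _ ≤ max 1 (Nat.factorial (Nat.ceil α) : ℝ) * Real.exp y := by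
          nlinarith [le_max_left 1 (Nat.factorial (Nat.ceil α) : ℝ)]
  · have h1 : y ^ α ≤ y ^ ((Nat.ceil α : ℕ) : ℝ) :=
      Real.rpow_le_rpow_of_exponent_le h (by exact_mod_cast Nat.le_ceil α)
    have h2 : y ^ (Nat.ceil α : ℕ) ≤ (Nat.factorial (Nat.ceil α) : ℝ) * Real.exp y := by
      have := Real.pow_div_factorial_le_exp y (le_trans zero_le_one h) (Nat.ceil α)
      have hf : (0:ℝ) < (Nat.factorial (Nat.ceil α) : ℝ) := by positivity
      rw [div_le_iff₀ hf] at this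
      linarith [this]
    calc y ^ α ≤ y ^ ((Nat.ceil α : ℕ) : ℝ) := h1
      _ = y ^ (Nat.ceil α : ℕ) := Real.rpow_natCast y _
      _ ≤ (Nat.factorial (Nat.ceil α) : ℝ) * Real.exp y := h2
      _ ≤ max 1 (Nat.factorial (Nat.ceil α) : ℝ) * Real.exp y := by
          have := le_max_right 1 (Nat.factorial (Nat.ceil α) : ℝ)
          nlinarith

/-- Smoothing estimate for the Cahn–Hilliard semigroup applied to `I - e^{-A² s}`,
in Fourier-coefficient form (second inequality of Lemma 2.1). -/
theorem stmt1 (γ₁ γ₂ γ₃ : ℝ) (hγ₁ : 0 ≤ γ₁) (hγ₂ : 0 ≤ γ₂) (hγ₃ : 0 ≤ γ₃) (hγ₃' : γ₃ < 1)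
    (hsum : 0 < γ₁ - γ₂ + 2 * γ₃) :
    ∃ C : ℝ, 0 < C ∧ ∀ s t : ℝ, 0 < s → 0 < t → ∀ c : ℕ → ℝ,
      Summable (fun j : ℕ => (j : ℝ) ^ (4 * γ₂) * (c j) ^ 2) →
      Real.sqrt (∑' j : ℕ, (j : ℝ) ^ (4 * γ₁) * Real.exp (-2 * (j : ℝ) ^ 4 * t)
          * (1 - Real.exp (-(j : ℝ) ^ 4 * s)) ^ 2 * (c j) ^ 2)
        ≤ C * (t ^ (-(γ₁ - γ₂ + 2 * γ₃) / 2) * s ^ γ₃ * Real.exp (-t / 2)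
              * Real.sqrt (∑' j : ℕ, (j : ℝ) ^ (4 * γ₂) * (c j) ^ 2)
            + gfun γ₁ * |c 0|) := by
  set α : ℝ := γ₁ - γ₂ + 2 * γ₃ with hαdef
  obtain ⟨M, hM1, hM⟩ := rpow_le_const_mul_exp α hsum
  have hM0 : (0:ℝ) < M := lt_of_lt_of_le one_pos hM1
  refine ⟨Real.sqrt M, Real.sqrt_pos.mpr hM0, fun s t hs ht c hc => ?_⟩
  set K : ℝ := M * t ^ (-α) * s ^ (2 * γ₃) * Real.exp (-t) with hKdef
  have hK0 : 0 ≤ K := by positivity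
  -- termwise bound
  have hle : ∀ j : ℕ, (j : ℝ) ^ (4 * γ₁) * Real.exp (-2 * (j : ℝ) ^ 4 * t)
      * (1 - Real.exp (-(j : ℝ) ^ 4 * s)) ^ 2 * (c j) ^ 2
      ≤ K * ((j : ℝ) ^ (4 * γ₂) * (c j) ^ 2) := by
    intro j
    rcases Nat.eq_zero_or_pos j with hj | hj
    · subst hj
      simp only [Nat.cast_zero]
      norm_num
      positivity
    · have hu : (1:ℝ) ≤ (j : ℝ) := by exact_mod_cast hj
      have hu0 : (0:ℝ) < (j:ℝ) := lt_of_lt_of_le one_pos hu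
      set b : ℝ := (j : ℝ) ^ 4 with hbdef
      have hb1 : (1:ℝ) ≤ b := one_le_pow₀ hu
      have hb0 : (0:ℝ) < b := lt_of_lt_of_le one_pos hb1
      -- L1 : (1 - exp(-(b*s)))^2 ≤ (b*s)^(2γ₃)
      have hbs : 0 < b * s := mul_pos hb0 hs
      have L1a : 1 - Real.exp (-(b * s)) ≤ (b * s) ^ γ₃ := by
        rcases le_total (b * s) 1 with h | h
        · have e1 : 1 - (b*s) ≤ Real.exp (-(b*s)) := by
            have := Real.add_one_le_exp (-(b*s)); linarith
          have e2 : (b*s) ^ (1:ℝ) ≤ (b*s) ^ γ₃ :=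
            Real.rpow_le_rpow_of_exponent_ge hbs h hγ₃'.le
          rw [Real.rpow_one] at e2; linarith
        · have e2 : (1:ℝ) ≤ (b*s) ^ γ₃ := Real.one_le_rpow h hγ₃
          have := (Real.exp_pos (-(b*s))).le
          linarith
      have L1nn : 0 ≤ 1 - Real.exp (-(b * s)) := by
        have : Real.exp (-(b*s)) ≤ Real.exp 0 := Real.exp_le_exp.mpr (by linarith)
        simpa using this
      have L1 : (1 - Real.exp (-(b * s))) ^ 2 ≤ (b * s) ^ (2 * γ₃) := by
        have := mul_le_mul L1a L1a L1nn (Real.rpow_nonneg hbs.le _)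
        calc (1 - Real.exp (-(b * s))) ^ 2 = (1 - Real.exp (-(b*s))) * (1 - Real.exp (-(b*s))) := sq _
          _ ≤ (b*s) ^ γ₃ * (b*s) ^ γ₃ := this
          _ = (b*s) ^ (2*γ₃) := by rw [← Real.rpow_add hbs]; ring_nf
      -- L2 : b^α * exp(-2*(b*t)) ≤ M * t^(-α) * exp(-t)
      have hbt : 0 < b * t := mul_pos hb0 ht
      have L2 : b ^ α * Real.exp (-2 * (b * t)) ≤ M * t ^ (-α) * Real.exp (-t) := by
        have e1 : b ^ α = (b * t) ^ α * t ^ (-α) := by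
          rw [Real.mul_rpow hb0.le ht.le, Real.rpow_neg ht.le]
          field_simp
        have e2 : (b*t) ^ α ≤ M * Real.exp (b*t) := hM _ hbt.le
        have e3 : Real.exp (b*t) * Real.exp (-2 * (b*t)) = Real.exp (-(b*t)) := by
          rw [← Real.exp_add]; ring_nf
        have e4 : Real.exp (-(b*t)) ≤ Real.exp (-t) := by
          apply Real.exp_le_exp.mpr
          nlinarith
        have htn : (0:ℝ) ≤ t ^ (-α) := Real.rpow_nonneg ht.le _
        calc b ^ α * Real.exp (-2 * (b*t))
            = (b*t) ^ α * Real.exp (-2 * (b*t)) * t ^ (-α) := by rw [e1]; ring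
          _ ≤ M * Real.exp (b*t) * Real.exp (-2 * (b*t)) * t ^ (-α) := by
              apply mul_le_mul_of_nonneg_right _ htn
              exact mul_le_mul_of_nonneg_right e2 (Real.exp_pos _).le
          _ = M * Real.exp (-(b*t)) * t ^ (-α) := by rw [mul_assoc M, e3]
          _ ≤ M * Real.exp (-t) * t ^ (-α) := by
              apply mul_le_mul_of_nonneg_right _ htn
              exact mul_le_mul_of_nonneg_left e4 hM0.le
          _ = M * t ^ (-α) * Real.exp (-t) := by ring
      -- exponent arithmetic: u^(4γ₁) * b^(2γ₃) = u^(4γ₂) * b^α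
      have E : (j:ℝ) ^ (4*γ₁) * b ^ (2*γ₃) = (j:ℝ) ^ (4*γ₂) * b ^ α := by
        rw [hbdef, ← Real.rpow_natCast (j:ℝ) 4, ← Real.rpow_mul hu0.le,
          ← Real.rpow_mul hu0.le, ← Real.rpow_add hu0, ← Real.rpow_add hu0]
        congr 1
        push_cast
        rw [hαdef]; ring
      -- combine
      have hc2 : (0:ℝ) ≤ (c j)^2 := sq_nonneg _
      have step1 : (j : ℝ) ^ (4 * γ₁) * Real.exp (-2 * b * t)
          * (1 - Real.exp (-(b * s))) ^ 2 * (c j) ^ 2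
          ≤ (j : ℝ) ^ (4 * γ₁) * Real.exp (-2 * b * t) * ((b*s) ^ (2*γ₃)) * (c j) ^ 2 := by
        apply mul_le_mul_of_nonneg_right _ hc2
        apply mul_le_mul_of_nonneg_left L1
        positivity
      have eq2 : (j : ℝ) ^ (4 * γ₁) * Real.exp (-2 * b * t) * ((b*s) ^ (2*γ₃)) * (c j) ^ 2
          = ((j:ℝ) ^ (4*γ₂) * (b ^ α * Real.exp (-2 * (b*t)))) * s ^ (2*γ₃) * (c j)^2 := by
        rw [Real.mul_rpow hb0.le hs.le, show (-2:ℝ)*b*t = -2*(b*t) from by ring]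
        linear_combination (Real.exp (-2*(b*t)) * s^(2*γ₃) * (c j)^2) * E
      have step2 : ((j:ℝ) ^ (4*γ₂) * (b ^ α * Real.exp (-2 * (b*t)))) * s ^ (2*γ₃) * (c j)^2
          ≤ ((j:ℝ) ^ (4*γ₂) * (M * t ^ (-α) * Real.exp (-t))) * s ^ (2*γ₃) * (c j)^2 := by
        apply mul_le_mul_of_nonneg_right _ hc2
        apply mul_le_mul_of_nonneg_right _ (Real.rpow_nonneg hs.le _)
        exact mul_le_mul_of_nonneg_left L2 (Real.rpow_nonneg hu0.le _)
      calc (j : ℝ) ^ (4 * γ₁) * Real.exp (-2 * (j:ℝ)^4 * t)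
            * (1 - Real.exp (-(j:ℝ)^4 * s)) ^ 2 * (c j) ^ 2
          = (j : ℝ) ^ (4 * γ₁) * Real.exp (-2 * b * t)
            * (1 - Real.exp (-(b * s))) ^ 2 * (c j) ^ 2 := by rw [hbdef]; ring_nf
        _ ≤ (j : ℝ) ^ (4 * γ₁) * Real.exp (-2 * b * t) * ((b*s) ^ (2*γ₃)) * (c j) ^ 2 := step1
        _ = ((j:ℝ) ^ (4*γ₂) * (b ^ α * Real.exp (-2 * (b*t)))) * s ^ (2*γ₃) * (c j)^2 := eq2
        _ ≤ ((j:ℝ) ^ (4*γ₂) * (M * t ^ (-α) * Real.exp (-t))) * s ^ (2*γ₃) * (c j)^2 := step2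
        _ = K * ((j : ℝ) ^ (4 * γ₂) * (c j) ^ 2) := by rw [hKdef]; ring
  -- sum up
  have hfnn : ∀ j : ℕ, 0 ≤ (j : ℝ) ^ (4 * γ₁) * Real.exp (-2 * (j : ℝ) ^ 4 * t)
      * (1 - Real.exp (-(j : ℝ) ^ 4 * s)) ^ 2 * (c j) ^ 2 := by
    intro j; positivity
  have hKs : Summable (fun j : ℕ => K * ((j : ℝ) ^ (4 * γ₂) * (c j) ^ 2)) := hc.mul_left K
  have hfs : Summable (fun j : ℕ => (j : ℝ) ^ (4 * γ₁) * Real.exp (-2 * (j : ℝ) ^ 4 * t)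
      * (1 - Real.exp (-(j : ℝ) ^ 4 * s)) ^ 2 * (c j) ^ 2) :=
    Summable.of_nonneg_of_le hfnn hle hKs
  have htsum : (∑' j : ℕ, (j : ℝ) ^ (4 * γ₁) * Real.exp (-2 * (j : ℝ) ^ 4 * t)
      * (1 - Real.exp (-(j : ℝ) ^ 4 * s)) ^ 2 * (c j) ^ 2)
      ≤ K * ∑' j : ℕ, (j : ℝ) ^ (4 * γ₂) * (c j) ^ 2 := by
    rw [← tsum_mul_left]
    exact Summable.tsum_le_tsum hle hfs hKs
  set S : ℝ := ∑' j : ℕ, (j : ℝ) ^ (4 * γ₂) * (c j) ^ 2 with hSdef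
  have hS0 : 0 ≤ S := tsum_nonneg (fun j => by positivity)
  have h1 : Real.sqrt (∑' j : ℕ, (j : ℝ) ^ (4 * γ₁) * Real.exp (-2 * (j : ℝ) ^ 4 * t)
      * (1 - Real.exp (-(j : ℝ) ^ 4 * s)) ^ 2 * (c j) ^ 2) ≤ Real.sqrt (K * S) :=
    Real.sqrt_le_sqrt htsum
  have hKsplit : Real.sqrt (K * S) = Real.sqrt M * (t ^ (-α/2) * s ^ γ₃ * Real.exp (-t/2)
      * Real.sqrt S) := by
    rw [hKdef]
    rw [Real.sqrt_mul (by positivity), Real.sqrt_mul (by positivity),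
      Real.sqrt_mul (by positivity), Real.sqrt_mul hM0.le]
    have e1 : Real.sqrt (t ^ (-α)) = t ^ (-α/2) := by
      rw [Real.sqrt_eq_rpow, ← Real.rpow_mul ht.le]; ring_nf
    have e2 : Real.sqrt (s ^ (2*γ₃)) = s ^ γ₃ := by
      rw [Real.sqrt_eq_rpow, ← Real.rpow_mul hs.le]; ring_nf
    have e3 : Real.sqrt (Real.exp (-t)) = Real.exp (-t/2) := by
      rw [← Real.exp_half]
    rw [e1, e2, e3]; ring
  have hg : 0 ≤ gfun γ₁ * |c 0| := by
    apply mul_nonneg _ (abs_nonneg _)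
    unfold gfun; split <;> norm_num
  calc Real.sqrt (∑' j : ℕ, (j : ℝ) ^ (4 * γ₁) * Real.exp (-2 * (j : ℝ) ^ 4 * t)
        * (1 - Real.exp (-(j : ℝ) ^ 4 * s)) ^ 2 * (c j) ^ 2)
      ≤ Real.sqrt (K * S) := h1
    _ = Real.sqrt M * (t ^ (-α/2) * s ^ γ₃ * Real.exp (-t/2) * Real.sqrt S) := hKsplit
    _ ≤ Real.sqrt M * (t ^ (-α/2) * s ^ γ₃ * Real.exp (-t/2) * Real.sqrt S
          + gfun γ₁ * |c 0|) := by
        apply mul_le_mul_of_nonneg_left _ (Real.sqrt_nonneg M)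
        linarith
end

section
/- For every t > 0 and all x, z ∈ (0,π): ∫_0^π |G_t(x,y) − G_t(z,y)|² dy ≤ e^{−t} ( Σ_{j=0}^∞ j² e^{−j⁴ t} ) · |x − z|². -/
open Real MeasureTheory

/-- The Neumann eigenfunctions of the Laplacian on `(0, π)`:
`φ_0 = √(1/π)` and `φ_j(x) = √(2/π) cos(j x)` for `j ≥ 1`. -/
noncomputable def phi (j : ℕ) (x : ℝ) : ℝ :=
  if j = 0 then Real.sqrt (1 / Real.pi) else Real.sqrt (2 / Real.pi) * Real.cos (j * x)

/-- The Green's function `G_t(x,y) = Σ_j e^{-λ_j² t} φ_j(x) φ_j(y)` with `λ_j = j²`. -/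
noncomputable def Gker (t x y : ℝ) : ℝ :=
  ∑' j : ℕ, Real.exp (-(j : ℝ) ^ 4 * t) * phi j x * phi j y


lemma sqrt_two_div_pi_le_one : Real.sqrt (2 / Real.pi) ≤ 1 := by
  rw [show (1:ℝ) = Real.sqrt 1 by simp]
  apply Real.sqrt_le_sqrt
  rw [div_le_one Real.pi_pos]
  linarith [Real.pi_gt_three]

lemma abs_phi_le (j : ℕ) (y : ℝ) : |phi j y| ≤ 1 := by
  unfold phi
  split_ifs
  · rw [abs_of_nonneg (Real.sqrt_nonneg _)]
    refine le_trans (Real.sqrt_le_sqrt ?_) sqrt_two_div_pi_le_one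
    gcongr
    norm_num
  · rw [abs_mul, abs_of_nonneg (Real.sqrt_nonneg _)]
    have := mul_le_mul sqrt_two_div_pi_le_one (Real.abs_cos_le_one ((j:ℝ)*y))
      (abs_nonneg _) zero_le_one
    linarith
lemma cos_lip (a b : ℝ) : |Real.cos a - Real.cos b| ≤ |a - b| := by
  rw [Real.cos_sub_cos]
  have h1 : |(-2) * Real.sin ((a+b)/2) * Real.sin ((a-b)/2)|
      = 2 * |Real.sin ((a+b)/2)| * |Real.sin ((a-b)/2)| := by
    rw [abs_mul, abs_mul]; norm_num
  rw [h1]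
  have h2 : 2 * |Real.sin ((a+b)/2)| * |Real.sin ((a-b)/2)| ≤ 2 * 1 * |(a-b)/2| := by
    have ha : 2 * |Real.sin ((a+b)/2)| ≤ 2 * 1 :=
      mul_le_mul_of_nonneg_left (Real.abs_sin_le_one _) (by norm_num)
    exact mul_le_mul ha Real.abs_sin_le_abs (abs_nonneg _) (by norm_num)
  refine h2.trans (le_of_eq ?_)
  rw [abs_div]
  simp [abs_of_nonneg]
  ring

lemma abs_phi_sub_le (j : ℕ) (x z : ℝ) : |phi j x - phi j z| ≤ j * |x - z| := by
  unfold phi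
  split_ifs with h
  · simp [h]
  · rw [← mul_sub, abs_mul, abs_of_nonneg (Real.sqrt_nonneg _)]
    calc Real.sqrt (2/Real.pi) * |Real.cos (j*x) - Real.cos (j*z)|
        ≤ 1 * |(j:ℝ)*x - j*z| :=
          mul_le_mul sqrt_two_div_pi_le_one (cos_lip _ _) (abs_nonneg _) zero_le_one
    _ = j * |x - z| := by rw [one_mul, ← mul_sub, abs_mul, Nat.abs_cast]

lemma exp_quartic_le (t : ℝ) (_ht : 0 < t) (j : ℕ) :
    Real.exp (-(j:ℝ)^4 * t) ≤ Real.exp (-t) ^ j := by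
  rw [← Real.exp_nat_mul]
  apply Real.exp_le_exp.2
  have hj : (j:ℝ) ≤ (j:ℝ)^4 := by
    exact_mod_cast Nat.le_self_pow (by norm_num) j
  nlinarith

lemma summable_pow_exp (t : ℝ) (ht : 0 < t) (k : ℕ) :
    Summable (fun j : ℕ => (j:ℝ)^k * Real.exp (-(j:ℝ)^4 * t)) := by
  have hr : ‖Real.exp (-t)‖ < 1 := by
    rw [Real.norm_eq_abs, abs_of_pos (Real.exp_pos _)]
    exact Real.exp_lt_one_iff.2 (by linarith)
  refine Summable.of_nonneg_of_le (fun j => by positivity) (fun j => ?_)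
    (summable_pow_mul_geometric_of_norm_lt_one k hr)
  exact mul_le_mul_of_nonneg_left (exp_quartic_le t ht j) (by positivity)

lemma summable_exp (t : ℝ) (ht : 0 < t) :
    Summable (fun j : ℕ => Real.exp (-(j:ℝ)^4 * t)) := by
  simpa using summable_pow_exp t ht 0

lemma integral_cos_c (c : ℝ) (hc : c ≠ 0) (hs : Real.sin (c * Real.pi) = 0) :
    ∫ y in (0:ℝ)..Real.pi, Real.cos (c*y) = 0 := by
  rw [intervalIntegral.integral_comp_mul_left (fun x => Real.cos x) hc]
  simp [integral_cos, hs]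

lemma integral_cos_cos (j k : ℕ) :
    ∫ y in (0:ℝ)..Real.pi, Real.cos (j*y) * Real.cos (k*y)
      = if j = k then (if j = 0 then Real.pi else Real.pi/2) else 0 := by
  have heq : ∀ y : ℝ, Real.cos (j*y) * Real.cos (k*y)
      = (Real.cos (((j:ℝ)-k)*y) + Real.cos (((j:ℝ)+k)*y)) / 2 := by
    intro y
    have h := Real.two_mul_cos_mul_cos ((j:ℝ)*y) ((k:ℝ)*y)
    rw [show (j:ℝ)*y - k*y = ((j:ℝ)-k)*y by ring,
        show (j:ℝ)*y + k*y = ((j:ℝ)+k)*y by ring] at h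
    linarith
  simp_rw [heq]
  have hint1 : IntervalIntegrable (fun y : ℝ => Real.cos (((j:ℝ)-k)*y)) volume 0 Real.pi :=
    (Real.continuous_cos.comp (continuous_const.mul continuous_id)).intervalIntegrable _ _
  have hint2 : IntervalIntegrable (fun y : ℝ => Real.cos (((j:ℝ)+k)*y)) volume 0 Real.pi :=
    (Real.continuous_cos.comp (continuous_const.mul continuous_id)).intervalIntegrable _ _
  rw [intervalIntegral.integral_div, intervalIntegral.integral_add hint1 hint2]
  by_cases hjk : j = k
  · subst hjk
    simp only [sub_self, zero_mul, Real.cos_zero]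
    rw [intervalIntegral.integral_const]
    by_cases hj : j = 0
    · subst hj
      simp
    · have hnk : j + j ≠ 0 := by omega
      have h2 : ((j:ℝ)+j) ≠ 0 := by exact_mod_cast hnk
      rw [integral_cos_c _ h2 (by
        rw [show ((j:ℝ)+j) = ((j+j:ℕ):ℝ) by push_cast; ring]
        exact Real.sin_nat_mul_pi _)]
      simp [hj]
  · have h1 : ((j:ℝ) - k) ≠ 0 := sub_ne_zero.2 (by exact_mod_cast hjk)
    have hnk : j + k ≠ 0 := fun h => hjk (by omega)
    have h2 : ((j:ℝ)+k) ≠ 0 := by exact_mod_cast hnk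
    rw [integral_cos_c _ h1 (by
      rw [show ((j:ℝ)-k) = (((j:ℤ)-k : ℤ):ℝ) by push_cast; ring]
      exact Real.sin_int_mul_pi _)]
    rw [integral_cos_c _ h2 (by
      rw [show ((j:ℝ)+k) = ((j+k:ℕ):ℝ) by push_cast; ring]
      exact Real.sin_nat_mul_pi _)]
    simp [hjk]

lemma phi_zero (y : ℝ) : phi 0 y = Real.sqrt (1/Real.pi) := by simp [phi]

lemma phi_of_ne {j : ℕ} (hj : j ≠ 0) (y : ℝ) :
    phi j y = Real.sqrt (2/Real.pi) * Real.cos ((j:ℝ)*y) := by simp [phi, hj]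

lemma phi_orth (j k : ℕ) :
    ∫ y in (0:ℝ)..Real.pi, phi j y * phi k y = if j = k then 1 else 0 := by
  have hpi := Real.pi_pos
  by_cases hj : j = 0 <;> by_cases hk : k = 0
  · subst hj; subst hk
    have h : ∀ y : ℝ, phi 0 y * phi 0 y = 1 / Real.pi := by
      intro y
      rw [phi_zero, Real.mul_self_sqrt (by positivity)]
    simp_rw [h]
    rw [intervalIntegral.integral_const]
    simp only [if_pos rfl, smul_eq_mul, sub_zero]
    field_simp
    simp
  · subst hj
    have h : ∀ y : ℝ, phi 0 y * phi k y
        = (Real.sqrt (1/Real.pi) * Real.sqrt (2/Real.pi)) * Real.cos ((k:ℝ)*y) := by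
      intro y
      rw [phi_zero, phi_of_ne hk]
      ring
    simp_rw [h]
    rw [intervalIntegral.integral_const_mul,
      integral_cos_c k (Nat.cast_ne_zero.2 hk) (Real.sin_nat_mul_pi k)]
    simp [Ne.symm hk]
  · subst hk
    have h : ∀ y : ℝ, phi j y * phi 0 y
        = (Real.sqrt (1/Real.pi) * Real.sqrt (2/Real.pi)) * Real.cos ((j:ℝ)*y) := by
      intro y
      rw [phi_zero, phi_of_ne hj]
      ring
    simp_rw [h]
    rw [intervalIntegral.integral_const_mul,
      integral_cos_c j (Nat.cast_ne_zero.2 hj) (Real.sin_nat_mul_pi j)]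
    simp [hj]
  · have h : ∀ y : ℝ, phi j y * phi k y
        = (2/Real.pi) * (Real.cos ((j:ℝ)*y) * Real.cos ((k:ℝ)*y)) := by
      intro y
      rw [phi_of_ne hj, phi_of_ne hk,
        show Real.sqrt (2/Real.pi) * Real.cos ((j:ℝ)*y) * (Real.sqrt (2/Real.pi) * Real.cos ((k:ℝ)*y))
        = (Real.sqrt (2/Real.pi) * Real.sqrt (2/Real.pi)) * (Real.cos ((j:ℝ)*y) * Real.cos ((k:ℝ)*y)) by ring,
        Real.mul_self_sqrt (by positivity)]
    simp_rw [h]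
    rw [intervalIntegral.integral_const_mul, integral_cos_cos j k]
    by_cases hjk : j = k
    · subst hjk
      rw [if_pos rfl, if_pos rfl, if_neg hj]
      field_simp
    · simp [hjk]

lemma phi_orth_Ioo (j k : ℕ) :
    ∫ y in Set.Ioo (0:ℝ) Real.pi, phi j y * phi k y = if j = k then 1 else 0 := by
  rw [← MeasureTheory.integral_Ioc_eq_integral_Ioo,
    ← intervalIntegral.integral_of_le Real.pi_pos.le]
  exact phi_orth j k

lemma summable_Gterm (t : ℝ) (ht : 0 < t) (x y : ℝ) :
    Summable (fun j : ℕ => Real.exp (-(j:ℝ)^4 * t) * phi j x * phi j y) := by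
  apply Summable.of_abs
  refine Summable.of_nonneg_of_le (fun j => abs_nonneg _) (fun j => ?_) (summable_exp t ht)
  rw [abs_mul, abs_mul, abs_of_pos (Real.exp_pos _)]
  calc Real.exp (-(j:ℝ)^4*t) * |phi j x| * |phi j y|
      ≤ Real.exp (-(j:ℝ)^4*t) * 1 * 1 := by
        apply mul_le_mul (mul_le_mul le_rfl (abs_phi_le j x) (abs_nonneg _) (Real.exp_pos _).le)
          (abs_phi_le j y) (abs_nonneg _)
        positivity
  _ = Real.exp (-(j:ℝ)^4*t) := by ring

lemma continuous_phi (j : ℕ) : Continuous (phi j) := by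
  unfold phi
  split_ifs
  · exact continuous_const
  · exact continuous_const.mul (Real.continuous_cos.comp (continuous_const.mul continuous_id))


/-- Spatial Hölder estimate for the Green's function (Lemma 3.1, first inequality). -/
theorem stmt2 (t : ℝ) (ht : 0 < t) (x z : ℝ)
    (hx : x ∈ Set.Ioo 0 Real.pi) (hz : z ∈ Set.Ioo 0 Real.pi) :
    ∫ y in Set.Ioo (0 : ℝ) Real.pi, |Gker t x y - Gker t z y| ^ 2
      ≤ Real.exp (-t) * (∑' j : ℕ, (j : ℝ) ^ 2 * Real.exp (-(j : ℝ) ^ 4 * t)) * |x - z| ^ 2 := by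
  have hpi := Real.pi_pos
  set c : ℕ → ℝ := fun j => Real.exp (-(j:ℝ)^4 * t) with hc
  set a : ℕ → ℝ := fun j => c j * (phi j x - phi j z) with ha
  -- basic bounds on a
  have ha_abs : ∀ j, |a j| ≤ 2 * c j := by
    intro j
    rw [ha, abs_mul, abs_of_pos (Real.exp_pos _)]
    have h2 : |phi j x - phi j z| ≤ 2 := by
      calc |phi j x - phi j z| ≤ |phi j x| + |phi j z| := abs_sub _ _
      _ ≤ 1 + 1 := add_le_add (abs_phi_le j x) (abs_phi_le j z)
      _ = 2 := by norm_num
    calc c j * |phi j x - phi j z| ≤ c j * 2 :=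
      mul_le_mul_of_nonneg_left h2 (Real.exp_pos _).le
    _ = 2 * c j := by ring
  have hc_sum : Summable c := summable_exp t ht
  have ha_abs_sum : Summable (fun j => |a j|) :=
    Summable.of_nonneg_of_le (fun j => abs_nonneg _) ha_abs (hc_sum.mul_left 2)
  -- expansion of the difference
  have hexp : ∀ y, Gker t x y - Gker t z y = ∑' j, a j * phi j y := by
    intro y
    rw [Gker, Gker, ← Summable.tsum_sub (summable_Gterm t ht x y) (summable_Gterm t ht z y)]
    apply tsum_congr
    intro j
    simp only [ha, hc]
    ring
  -- pointwise summability of the expansion coefficients times phi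
  have haphi : ∀ y, Summable (fun j => ‖a j * phi j y‖) := by
    intro y
    refine Summable.of_nonneg_of_le (fun j => norm_nonneg _) (fun j => ?_) ha_abs_sum
    rw [Real.norm_eq_abs, abs_mul]
    calc |a j| * |phi j y| ≤ |a j| * 1 :=
      mul_le_mul_of_nonneg_left (abs_phi_le j y) (abs_nonneg _)
    _ = |a j| := by ring
  -- squared expansion as a double sum
  have hsq : ∀ y, (∑' j, a j * phi j y)^2
      = ∑' p : ℕ × ℕ, (a p.1 * phi p.1 y) * (a p.2 * phi p.2 y) := by
    intro y
    rw [sq, tsum_mul_tsum_of_summable_norm (haphi y) (haphi y)]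
  -- integrability of each term
  have hmeas : ∀ p : ℕ × ℕ, Continuous (fun y => (a p.1 * phi p.1 y) * (a p.2 * phi p.2 y)) :=
    fun p => ((continuous_const.mul (continuous_phi p.1)).mul
      (continuous_const.mul (continuous_phi p.2)))
  have hInt : ∀ p : ℕ × ℕ, Integrable (fun y => (a p.1 * phi p.1 y) * (a p.2 * phi p.2 y))
      (volume.restrict (Set.Ioo (0:ℝ) Real.pi)) := by
    intro p
    exact ((hmeas p).integrableOn_Icc (a := 0) (b := Real.pi)).mono_set Set.Ioo_subset_Icc_self
  have hvol : volume (Set.Ioo (0:ℝ) Real.pi) = ENNReal.ofReal Real.pi := by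
    rw [Real.volume_Ioo, sub_zero]
  have hnorm : ∀ p : ℕ × ℕ,
      ∫ y in Set.Ioo (0:ℝ) Real.pi, ‖(a p.1 * phi p.1 y) * (a p.2 * phi p.2 y)‖
        ≤ (|a p.1| * |a p.2|) * Real.pi := by
    intro p
    refine le_trans (le_abs_self _) ?_
    rw [← Real.norm_eq_abs]
    have hb : ∀ y ∈ Set.Ioo (0:ℝ) Real.pi,
        ‖‖(a p.1 * phi p.1 y) * (a p.2 * phi p.2 y)‖‖ ≤ |a p.1| * |a p.2| := by
      intro y _
      rw [norm_norm, norm_mul (a p.1 * phi p.1 y) (a p.2 * phi p.2 y),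
        Real.norm_eq_abs (a p.1 * phi p.1 y), Real.norm_eq_abs (a p.2 * phi p.2 y),
        abs_mul (a p.1) (phi p.1 y), abs_mul (a p.2) (phi p.2 y)]
      calc |a p.1| * |phi p.1 y| * (|a p.2| * |phi p.2 y|)
          ≤ |a p.1| * 1 * (|a p.2| * 1) := by
            apply mul_le_mul
            · exact mul_le_mul_of_nonneg_left (abs_phi_le _ _) (abs_nonneg _)
            · exact mul_le_mul_of_nonneg_left (abs_phi_le _ _) (abs_nonneg _)
            · positivity
            · positivity
      _ = |a p.1| * |a p.2| := by ring
    have := MeasureTheory.norm_setIntegral_le_of_norm_le_const (μ := volume)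
      (s := Set.Ioo (0:ℝ) Real.pi) (f := fun y => ‖(a p.1 * phi p.1 y) * (a p.2 * phi p.2 y)‖)
      (by rw [hvol]; exact ENNReal.ofReal_lt_top) hb
    rw [measureReal_def, hvol, ENNReal.toReal_ofReal hpi.le] at this
    exact this
  have hnn : ∀ p : ℕ × ℕ,
      0 ≤ ∫ y in Set.Ioo (0:ℝ) Real.pi, ‖(a p.1 * phi p.1 y) * (a p.2 * phi p.2 y)‖ :=
    fun p => integral_nonneg (fun y => norm_nonneg _)
  have hsum_int : Summable (fun p : ℕ × ℕ =>
      ∫ y in Set.Ioo (0:ℝ) Real.pi, ‖(a p.1 * phi p.1 y) * (a p.2 * phi p.2 y)‖) := by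
    refine Summable.of_nonneg_of_le hnn hnorm ?_
    exact (Summable.mul_of_nonneg ha_abs_sum ha_abs_sum (fun j => abs_nonneg _)
      (fun j => abs_nonneg _)).mul_right Real.pi
  -- computing each integral
  have hterm : ∀ p : ℕ × ℕ,
      ∫ y in Set.Ioo (0:ℝ) Real.pi, (a p.1 * phi p.1 y) * (a p.2 * phi p.2 y)
        = if p.1 = p.2 then a p.1 ^ 2 else 0 := by
    intro p
    have h : (fun y => (a p.1 * phi p.1 y) * (a p.2 * phi p.2 y))
        = fun y => (a p.1 * a p.2) * (phi p.1 y * phi p.2 y) := by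
      funext y; ring
    rw [h, MeasureTheory.integral_const_mul, phi_orth_Ioo]
    by_cases hp : p.1 = p.2
    · rw [if_pos hp, if_pos hp, hp, sq]
      ring
    · rw [if_neg hp, if_neg hp, mul_zero]
  -- main computation
  have hmain : ∫ y in Set.Ioo (0 : ℝ) Real.pi, |Gker t x y - Gker t z y| ^ 2
      = ∑' j, a j ^ 2 := by
    have h1 : ∀ y, |Gker t x y - Gker t z y| ^ 2
        = ∑' p : ℕ × ℕ, (a p.1 * phi p.1 y) * (a p.2 * phi p.2 y) := by
      intro y
      rw [sq_abs, hexp y, hsq y]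
    simp_rw [h1]
    rw [← MeasureTheory.integral_tsum_of_summable_integral_norm hInt hsum_int]
    simp_rw [hterm]
    -- diagonal sum
    refine tsum_eq_tsum_of_ne_zero_bij (fun j => ((j : ℕ), (j : ℕ))) ?_ ?_ ?_
    · intro j k h
      exact Subtype.ext (congrArg Prod.fst h)
    · intro p hp
      simp only [Function.mem_support] at hp
      have hpd : p.1 = p.2 := by
        by_contra hne
        rw [if_neg hne] at hp
        exact hp rfl
      rw [if_pos hpd] at hp
      refine ⟨⟨p.1, hp⟩, ?_⟩
      simp [Prod.ext_iff, hpd]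
    · intro j
      simp
  rw [hmain]
  -- term-wise bound
  have hb : ∀ j : ℕ, a j ^ 2 ≤ Real.exp (-t) * ((j:ℝ)^2 * c j) * |x - z| ^ 2 := by
    intro j
    by_cases hj : j = 0
    · subst hj
      have : a 0 = 0 := by
        simp [ha, phi_zero]
      rw [this, zero_pow (by norm_num : (2:ℕ) ≠ 0)]
      positivity
    · have hc1 : c j ≤ Real.exp (-t) := by
        apply Real.exp_le_exp.2
        have hj1 : (1:ℝ) ≤ (j:ℝ) := by
          exact_mod_cast Nat.one_le_iff_ne_zero.2 hj
        have h1 : (1:ℝ) ≤ (j:ℝ)^4 := by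
          calc (1:ℝ) = 1^4 := (one_pow 4).symm
          _ ≤ (j:ℝ)^4 := pow_le_pow_left₀ zero_le_one hj1 4
        nlinarith [mul_le_mul_of_nonneg_right h1 ht.le]
      have hphi2 : (phi j x - phi j z)^2 ≤ (j:ℝ)^2 * |x - z|^2 := by
        rw [← sq_abs (phi j x - phi j z)]
        calc |phi j x - phi j z| ^ 2 ≤ ((j:ℝ) * |x - z|)^2 :=
          pow_le_pow_left₀ (abs_nonneg _) (abs_phi_sub_le j x z) 2
        _ = (j:ℝ)^2 * |x - z|^2 := by ring
      have hcnn : 0 ≤ c j := (Real.exp_pos _).le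
      calc a j ^ 2 = c j * c j * (phi j x - phi j z)^2 := by rw [ha]; ring
      _ ≤ Real.exp (-t) * c j * ((j:ℝ)^2 * |x - z|^2) := by
          apply mul_le_mul (mul_le_mul_of_nonneg_right hc1 hcnn) hphi2 (sq_nonneg _)
          positivity
      _ = Real.exp (-t) * ((j:ℝ)^2 * c j) * |x - z| ^ 2 := by ring
  have hrs : Summable (fun j : ℕ => Real.exp (-t) * ((j:ℝ)^2 * c j) * |x - z| ^ 2) :=
    ((summable_pow_exp t ht 2).mul_left (Real.exp (-t))).mul_right (|x - z|^2)
  have hls : Summable (fun j : ℕ => a j ^ 2) :=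
    Summable.of_nonneg_of_le (fun j => sq_nonneg _) hb hrs
  calc ∑' (j : ℕ), a j ^ 2 ≤ ∑' (j : ℕ), Real.exp (-t) * ((j:ℝ)^2 * c j) * |x - z| ^ 2 :=
    hls.tsum_le_tsum hb hrs
  _ = Real.exp (-t) * (∑' j : ℕ, (j : ℝ) ^ 2 * c j) * |x - z| ^ 2 := by
    rw [tsum_mul_right, tsum_mul_left]
end

section
/- Let X and V be measurable spaces and ι : V → X a measurable embedding (measurable, injective, mapping measurable sets to measurable sets). Let T be a nonempty index set and, for each t ∈ T, let κ_t be a Markov kernel on X and κ^V_t a Markov kernel on V satisfying the intertwining relation κ_t(ι v) = (κ^V_t v) pushed forward by ι, for every v ∈ V. If there is at most one probability measure on X that is invariant for κ_t for every t ∈ T, then there is at most one probability measure on V that is invariant for κ^V_t for every t ∈ T. -/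
open MeasureTheory

namespace MeasureTheory.Measure

variable {α β γ δ : Type*} [MeasurableSpace α] [MeasurableSpace β] [MeasurableSpace γ]
  [MeasurableSpace δ]

theorem bind_map_eq_map_bind_of_comp_eq {f : α → β} {g : γ → δ} {η : α → Measure γ}
    {κ : β → Measure δ} (hf : Measurable f) (hg : Measurable g) (hη : Measurable η)
    (hκ : Measurable κ) (h : ∀ a, κ (f a) = (η a).map g) (μ : Measure α) :
    (μ.map f).bind κ = (μ.bind η).map g := by
  have hκf : κ ∘ f = map g ∘ η := funext h
  rw [bind, map_map hκ hf, hκf, ← map_map (measurable_map g hg) hη, join_map_map hg, bind]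

end MeasureTheory.Measure

theorem stmt4_general {X V : Type*} [MeasurableSpace X] [MeasurableSpace V]
    (ι : V → X) (hι_meas : Measurable ι) (hι_inj : Function.Injective ι)
    (hι_img : ∀ s : Set V, MeasurableSet s → MeasurableSet (ι '' s))
    {T : Type*}
    (κ : T → X → Measure X) (κV : T → V → Measure V)
    (hκ_meas : ∀ t, Measurable (κ t)) (hκV_meas : ∀ t, Measurable (κV t))
    (h_intertwine : ∀ t v, κ t (ι v) = (κV t v).map ι)
    (h_unique : ∀ μ₁ μ₂ : Measure X,
      IsProbabilityMeasure μ₁ → IsProbabilityMeasure μ₂ →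
      (∀ t, μ₁.bind (κ t) = μ₁) → (∀ t, μ₂.bind (κ t) = μ₂) → μ₁ = μ₂) :
    ∀ ν₁ ν₂ : Measure V,
      IsProbabilityMeasure ν₁ → IsProbabilityMeasure ν₂ →
      (∀ t, ν₁.bind (κV t) = ν₁) → (∀ t, ν₂.bind (κV t) = ν₂) → ν₁ = ν₂ := by
  intro ν₁ ν₂ h₁ h₂ hinv₁ hinv₂
  have hι : MeasurableEmbedding ι := ⟨hι_inj, hι_meas, hι_img⟩
  have map_invariant (ν : Measure V) (hν : ∀ t, ν.bind (κV t) = ν) (t : T) :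
      (ν.map ι).bind (κ t) = ν.map ι := by
    rw [Measure.bind_map_eq_map_bind_of_comp_eq hι_meas hι_meas (hκV_meas t) (hκ_meas t)
      (h_intertwine t), hν t]
  exact hι.map_injective <| h_unique _ _ (Measure.isProbabilityMeasure_map hι_meas.aemeasurable)
    (Measure.isProbabilityMeasure_map hι_meas.aemeasurable) (map_invariant ν₁ hinv₁)
    (map_invariant ν₂ hinv₂)

/-- Uniqueness of invariant probability measures transfers from a space `X` to a
measurably embedded invariant subspace `V` (abstract kernel form of Lemma 3.2). -/
theorem stmt4 {X V : Type*} [MeasurableSpace X] [MeasurableSpace V]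
    (ι : V → X) (hι_meas : Measurable ι) (hι_inj : Function.Injective ι)
    (hι_img : ∀ s : Set V, MeasurableSet s → MeasurableSet (ι '' s))
    {T : Type*} [Nonempty T]
    (κ : T → X → Measure X) (κV : T → V → Measure V)
    (hκ_meas : ∀ t, Measurable (κ t)) (hκV_meas : ∀ t, Measurable (κV t))
    (hκ_prob : ∀ t x, IsProbabilityMeasure (κ t x))
    (hκV_prob : ∀ t v, IsProbabilityMeasure (κV t v))
    (h_intertwine : ∀ t v, κ t (ι v) = (κV t v).map ι)
    (h_unique : ∀ μ₁ μ₂ : Measure X,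
      IsProbabilityMeasure μ₁ → IsProbabilityMeasure μ₂ →
      (∀ t, μ₁.bind (κ t) = μ₁) → (∀ t, μ₂.bind (κ t) = μ₂) → μ₁ = μ₂) :
    ∀ ν₁ ν₂ : Measure V,
      IsProbabilityMeasure ν₁ → IsProbabilityMeasure ν₂ →
      (∀ t, ν₁.bind (κV t) = ν₁) → (∀ t, ν₂.bind (κV t) = ν₂) → ν₁ = ν₂ :=
  stmt4_general ι hι_meas hι_inj hι_img κ κV hκ_meas hκV_meas h_intertwine h_unique
end

section
/- Let N ≥ 2 be an integer, α ∈ ℝ, κ a Markov kernel on ℝ^N with k-step kernels P_k (k-fold composition of κ), and S ⊆ ℝ^N a compact set. Assume: (i) κ(v)(D_α) = 1 for every v ∈ D_α; (ii) there exists w* in the interior of S with w* ∈ D_α such that for every δ > 0 there is k̄ ∈ ℕ with P_{k̄}(w, B_δ(w*) ∩ D_α) > 0 for every w ∈ S ∩ D_α, where B_δ(w*) is the open Euclidean ball of radius δ about w*; (iii) for every k ≥ 1 there is a function p_k : ℝ^N × ℝ^N → ℝ, jointly continuous on (S ∩ D_α) × (S ∩ D_α), such that P_k(v,B) = ∫_B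 p_k(v,w) dμ_{D_α}(w) for every v ∈ S ∩ D_α and every Borel set B ⊆ S ∩ D_α. Then there exist k* ∈ ℕ, η > 0, and a probability measure ν on ℝ^N with ν(S ∩ D_α) = 1 such that P_{k*}(v, B ∩ D_α) ≥ η · ν(B ∩ D_α) for every Borel set B ⊆ ℝ^N and every v ∈ S ∩ D_α. -/
open MeasureTheory

noncomputable def iterKernel {E : Type*} [MeasurableSpace E]
    (κ : E → Measure E) : ℕ → E → Measure E
  | 0, v => Measure.dirac v
  | (k + 1), v => (iterKernel κ k v).bind κ

section aux
variable {E : Type*} [MeasurableSpace E] {κ : E → Measure E}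

lemma iterKernel_measurable (hκ : Measurable κ) (k : ℕ) :
    Measurable (iterKernel κ k) := by
  induction k with
  | zero => exact Measure.measurable_dirac
  | succ k ih =>
    have : Measurable fun m : Measure E => m.bind κ := Measure.measurable_bind' hκ
    exact this.comp ih

lemma iterKernel_prob (hκ : Measurable κ) (hp : ∀ v, IsProbabilityMeasure (κ v)) (k : ℕ)
    (v : E) : IsProbabilityMeasure (iterKernel κ k v) := by
  induction k with
  | zero => exact Measure.dirac.isProbabilityMeasure
  | succ k ih =>
    constructor
    rw [show iterKernel κ (k+1) v = (iterKernel κ k v).bind κ from rfl,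
      Measure.bind_apply MeasurableSet.univ hκ.aemeasurable]
    have : ∀ a, κ a Set.univ = 1 := fun a => (hp a).measure_univ
    simp only [this]
    simpa using ih.measure_univ

lemma iterKernel_add (hκ : Measurable κ) (a b : ℕ) (v : E) :
    iterKernel κ (a + b) v = (iterKernel κ a v).bind (iterKernel κ b) := by
  induction b with
  | zero => simp [iterKernel, Measure.bind_dirac]
  | succ b ih =>
    have h1 : iterKernel κ (a + (b+1)) v = (iterKernel κ (a+b) v).bind κ := rfl
    rw [h1, ih, Measure.bind_bind (iterKernel_measurable hκ b).aemeasurable hκ.aemeasurable]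
    rfl

/-- From a positive integral, extract a super-level set of positive finite measure. -/
lemma exists_posset {μ : Measure E} {W : Set E} (hW : MeasurableSet W) {f : E → ℝ}
    (hfi : IntegrableOn f W μ) (hpos : 0 < ∫ w in W, f w ∂μ)
    (hmeas : ∀ c : ℝ, MeasurableSet {w | w ∈ W ∧ c ≤ f w}) :
    ∃ c : ℝ, 0 < c ∧ ∃ A : Set E, MeasurableSet A ∧ A ⊆ W ∧ 0 < μ A ∧ μ A < ⊤ ∧
      ∀ w ∈ A, c ≤ f w := by
  set A : ℕ → Set E := fun n => {w | w ∈ W ∧ (1 : ℝ)/(n+1) ≤ f w} with hA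
  have hAm : ∀ n, MeasurableSet (A n) := fun n => hmeas _
  have hAW : ∀ n, A n ⊆ W := fun n w hw => hw.1
  have hAfin : ∀ n, μ (A n) < ⊤ := by
    intro n
    have h1 : (0:ℝ) < 1/(n+1) := by positivity
    have := hfi.measure_ge_lt_top h1
    have he : (μ.restrict W) {x | 1/(n+1) ≤ f x} = μ (A n) := by
      rw [Measure.restrict_apply' hW]
      congr 1
      ext w; exact ⟨fun h => ⟨h.2, h.1⟩, fun h => ⟨h.2, h.1⟩⟩
    rwa [he] at this
  by_contra hcon
  push_neg at hcon
  have hAzero : ∀ n, μ (A n) = 0 := by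
    intro n
    by_contra h
    obtain ⟨w, hw, hlt⟩ := hcon (1/(n+1)) (by positivity) (A n) (hAm n) (hAW n)
      (pos_iff_ne_zero.mpr h) (hAfin n)
    exact absurd hw.2 (not_le.mpr hlt)
  have hP : μ (⋃ n, A n) = 0 := measure_iUnion_null hAzero
  have hle : ∫ w in W, f w ∂μ ≤ 0 := by
    apply integral_nonpos_of_ae
    have h0 : (μ.restrict W) {w | 0 < f w} = 0 := by
      rw [Measure.restrict_apply' hW]
      refine le_antisymm (le_trans (measure_mono ?_) hP.le) (by simp)
      rintro w ⟨hfw, hwW⟩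
      have hfw' : 0 < f w := hfw
      obtain ⟨n, hn⟩ := exists_nat_one_div_lt hfw'
      exact Set.mem_iUnion.mpr ⟨n, hwW, by linarith⟩
    filter_upwards [measure_eq_zero_iff_ae_notMem.mp h0] with w hw
    exact not_lt.mp (fun h => hw h)
  linarith

end aux

/-- Mass-preserving minorization on the hyperplane `D_α` (Lemma 5.1): under the minorization
condition restricted to `D_α` (Assumption 5.1), there exist `k*`, `η > 0` and a probability
measure `ν` concentrated on `S ∩ D_α` with `P_{k*}(v, B ∩ D_α) ≥ η ν(B ∩ D_α)` for all
`v ∈ S ∩ D_α`. -/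
theorem stmt8 (N : ℕ) (hN : 2 ≤ N) (α : ℝ)
    (κ : EuclideanSpace ℝ (Fin N) → Measure (EuclideanSpace ℝ (Fin N)))
    (hκ_meas : Measurable κ) (hκ_prob : ∀ v, IsProbabilityMeasure (κ v))
    (S : Set (EuclideanSpace ℝ (Fin N))) (hS : IsCompact S)
    (Dα : Set (EuclideanSpace ℝ (Fin N)))
    (hDα : Dα = {u : EuclideanSpace ℝ (Fin N) |
      (1 / Real.pi) * ((1 / (N : ℝ)) * ∑ i, u i * Real.sqrt (1 / Real.pi)) = α})
    (μD : Measure (EuclideanSpace ℝ (Fin N)))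
    (hμD : μD = (MeasureTheory.Measure.hausdorffMeasure ((N : ℝ) - 1)).restrict Dα)
    -- (i) mass conservation
    (h_i : ∀ v ∈ Dα, κ v Dα = 1)
    -- (ii) accessibility of a point `w* ∈ Int(S) ∩ D_α`
    (wstar : EuclideanSpace ℝ (Fin N)) (hw_int : wstar ∈ interior S) (hw_D : wstar ∈ Dα)
    (h_ii : ∀ δ : ℝ, 0 < δ → ∃ kbar : ℕ,
      ∀ w ∈ S ∩ Dα, 0 < iterKernel κ kbar w (Metric.ball wstar δ ∩ Dα))
    -- (iii) jointly continuous densities w.r.t. the Hausdorff measure on `D_α`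
    (h_iii : ∀ k : ℕ, 1 ≤ k → ∃ p : EuclideanSpace ℝ (Fin N) → EuclideanSpace ℝ (Fin N) → ℝ,
      ContinuousOn (fun q : EuclideanSpace ℝ (Fin N) × EuclideanSpace ℝ (Fin N) => p q.1 q.2)
        ((S ∩ Dα) ×ˢ (S ∩ Dα)) ∧
      ∀ v ∈ S ∩ Dα, ∀ B : Set (EuclideanSpace ℝ (Fin N)), MeasurableSet B → B ⊆ S ∩ Dα →
        (iterKernel κ k v B).toReal = ∫ w in B, p v w ∂μD) :
    ∃ (kstar : ℕ) (η : ℝ) (ν : Measure (EuclideanSpace ℝ (Fin N))),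
      0 < η ∧ IsProbabilityMeasure ν ∧ ν (S ∩ Dα) = 1 ∧
      ∀ B : Set (EuclideanSpace ℝ (Fin N)), MeasurableSet B → ∀ v ∈ S ∩ Dα,
        ENNReal.ofReal η * ν (B ∩ Dα) ≤ iterKernel κ kstar v (B ∩ Dα) := by
  set K : Set (EuclideanSpace ℝ (Fin N)) := S ∩ Dα with hK
  -- basic topology / measurability of `Dα`, `K`
  have hDclosed : IsClosed Dα := by
    rw [hDα]
    have hcont : Continuous fun u : EuclideanSpace ℝ (Fin N) =>
        (1 / Real.pi) * ((1 / (N : ℝ)) * ∑ i, u i * Real.sqrt (1 / Real.pi)) := by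
      refine continuous_const.mul (continuous_const.mul ?_)
      exact continuous_finset_sum _ fun i _ =>
        ((continuous_apply i).comp (PiLp.continuous_ofLp (p := 2) (β := fun _ : Fin N => ℝ))).mul
          continuous_const
    exact isClosed_eq hcont continuous_const
  have hDmeas : MeasurableSet Dα := hDclosed.measurableSet
  have hKcomp : IsCompact K := hS.inter_right hDclosed
  have hKclosed : IsClosed K := hKcomp.isClosed
  have hKmeas : MeasurableSet K := hKclosed.measurableSet
  have hwS : wstar ∈ S := interior_subset hw_int
  have hwK : wstar ∈ K := ⟨hwS, hw_D⟩
  haveI hprob : ∀ k v, IsProbabilityMeasure (iterKernel κ k v) :=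
    fun k v => iterKernel_prob hκ_meas hκ_prob k v
  by_cases hdeg : K ⊆ {wstar}
  · -- degenerate case `K = {w*}` : take the Dirac measure and `k* = 0`
    refine ⟨0, 1, Measure.dirac wstar, one_pos, inferInstance, ?_, ?_⟩
    · exact Measure.dirac_apply_of_mem hwK
    · intro B hB v hv
      have hv' : v = wstar := hdeg hv
      have : iterKernel κ 0 v = Measure.dirac wstar := by rw [hv']; rfl
      rw [this, ENNReal.ofReal_one, one_mul]
  -- non-degenerate case
  obtain ⟨y, hyK, hy⟩ := Set.not_subset.mp hdeg
  have hd1 : 0 < dist y wstar := dist_pos.mpr (by simpa using hy)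
  obtain ⟨δ0, hδ0pos, hδ0sub⟩ := Metric.isOpen_iff.mp isOpen_interior wstar hw_int
  have hballS : Metric.ball wstar δ0 ⊆ S := hδ0sub.trans interior_subset
  set δ : ℝ := min δ0 (dist y wstar) with hδdef
  have hδpos : 0 < δ := lt_min hδ0pos hd1
  have hδle : δ ≤ δ0 := min_le_left _ _
  have hyδ : ∀ r : ℝ, r ≤ δ → y ∉ Metric.ball wstar r := by
    intro r hr hmem
    rw [Metric.mem_ball] at hmem
    have := min_le_right δ0 (dist y wstar)
    linarith [hδdef ▸ this]
  -- positivity of a one-step-or-more kernel forces `kbar ≥ 1`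
  have hforce : ∀ (r : ℝ) (k : ℕ), r ≤ δ →
      (0 : ENNReal) < iterKernel κ k y (Metric.ball wstar r ∩ Dα) → 1 ≤ k := by
    intro r k hr hpos
    rcases Nat.eq_zero_or_pos k with hk | hk
    · exfalso
      subst hk
      have h0 : iterKernel κ 0 y = Measure.dirac y := rfl
      rw [h0] at hpos
      by_cases hmem : y ∈ Metric.ball wstar r ∩ Dα
      · exact hyδ r hr hmem.1
      · rw [Measure.dirac_apply' y ((Metric.isOpen_ball.measurableSet).inter hDmeas),
          Set.indicator_of_notMem hmem] at hpos
        exact lt_irrefl _ hpos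
    · exact hk
  -- slices of a jointly continuous density are continuous on `K`
  have hslice : ∀ (p : EuclideanSpace ℝ (Fin N) → EuclideanSpace ℝ (Fin N) → ℝ),
      ContinuousOn (fun q : EuclideanSpace ℝ (Fin N) × EuclideanSpace ℝ (Fin N) => p q.1 q.2) (K ×ˢ K) →
      ∀ v ∈ K, ContinuousOn (p v) K := by
    intro p hp v hv
    have : ContinuousOn (fun w : EuclideanSpace ℝ (Fin N) => (fun q : EuclideanSpace ℝ (Fin N) × EuclideanSpace ℝ (Fin N) => p q.1 q.2) (v, w)) K := by
      apply hp.comp (Continuous.continuousOn (by fun_prop))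
      intro w hw
      exact Set.mk_mem_prod hv hw
    exact this
  -- super-level sets of slices are measurable
  have hlevel : ∀ (p : EuclideanSpace ℝ (Fin N) → EuclideanSpace ℝ (Fin N) → ℝ),
      ContinuousOn (fun q : EuclideanSpace ℝ (Fin N) × EuclideanSpace ℝ (Fin N) => p q.1 q.2) (K ×ˢ K) →
      ∀ v ∈ K, ∀ (W : Set (EuclideanSpace ℝ (Fin N))), MeasurableSet W → W ⊆ K →
      ∀ c : ℝ, MeasurableSet {w | w ∈ W ∧ c ≤ p v w} := by
    intro p hp v hv W hWmeas hWK c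
    have hcl : IsClosed (K ∩ (p v) ⁻¹' Set.Ici c) :=
      (hslice p hp v hv).preimage_isClosed_of_isClosed hKclosed isClosed_Ici
    have : {w | w ∈ W ∧ c ≤ p v w} = W ∩ (K ∩ (p v) ⁻¹' Set.Ici c) := by
      ext w
      constructor
      · rintro ⟨h1, h2⟩; exact ⟨h1, hWK h1, h2⟩
      · rintro ⟨h1, _, h3⟩; exact ⟨h1, h3⟩
    rw [this]
    exact hWmeas.inter hcl.measurableSet
  -- Step A : a set `A` of positive finite measure with a density lower bound from `wstar`
  obtain ⟨k0, hk0⟩ := h_ii δ hδpos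
  have hk0pos : 1 ≤ k0 := hforce δ k0 le_rfl (hk0 y hyK)
  obtain ⟨p0, hp0cont, hp0rep⟩ := h_iii k0 hk0pos
  set W0 : Set (EuclideanSpace ℝ (Fin N)) := Metric.ball wstar δ ∩ Dα with hW0
  have hW0K : W0 ⊆ K := fun w hw => ⟨hballS (Metric.ball_subset_ball hδle hw.1), hw.2⟩
  have hW0meas : MeasurableSet W0 := Metric.isOpen_ball.measurableSet.inter hDmeas
  have hPw : 0 < iterKernel κ k0 wstar W0 := hk0 wstar hwK
  have hrep0 := hp0rep wstar hwK W0 hW0meas hW0K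
  have hIpos : 0 < ∫ w in W0, p0 wstar w ∂μD := by
    rw [← hrep0]; exact ENNReal.toReal_pos hPw.ne' (measure_ne_top _ _)
  have hint0 : IntegrableOn (p0 wstar) W0 μD := by
    by_contra h
    rw [integral_undef h] at hIpos; exact lt_irrefl _ hIpos
  obtain ⟨c0, hc0pos, A, hAmeas, hAW0, hApos, hAfin, hAlb⟩ :=
    exists_posset hW0meas hint0 hIpos (hlevel p0 hp0cont wstar hwK W0 hW0meas hW0K)
  have hAK : A ⊆ K := hAW0.trans hW0K
  have hADα : A ⊆ Dα := fun w hw => (hAW0 hw).2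
  -- Step B : uniform continuity gives a lower bound for nearby first arguments
  have hUC0 := (hKcomp.prod hKcomp).uniformContinuousOn_of_continuous hp0cont
  rw [Metric.uniformContinuousOn_iff] at hUC0
  obtain ⟨r0, hr0pos, hUC0⟩ := hUC0 (c0/2) (by positivity)
  have hp0lb : ∀ u ∈ Metric.ball wstar r0 ∩ K, ∀ w ∈ A, c0/2 ≤ p0 u w := by
    intro u hu w hw
    have h1 : ((u, w) : EuclideanSpace ℝ (Fin N) × EuclideanSpace ℝ (Fin N)) ∈ K ×ˢ K :=
      Set.mk_mem_prod hu.2 (hAK hw)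
    have h2 : ((wstar, w) : EuclideanSpace ℝ (Fin N) × EuclideanSpace ℝ (Fin N)) ∈ K ×ˢ K :=
      Set.mk_mem_prod hwK (hAK hw)
    have hd : dist ((u, w) : EuclideanSpace ℝ (Fin N) × EuclideanSpace ℝ (Fin N)) (wstar, w)
        < r0 := by
      rw [Prod.dist_eq]; simp only [dist_self]
      exact max_lt (Metric.mem_ball.mp hu.1) hr0pos
    have hlt := hUC0 _ h1 _ h2 hd
    rw [Real.dist_eq] at hlt
    have h3 := hAlb w hw
    have h4 := abs_lt.mp hlt
    linarith [h4.1, h4.2]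
  -- Step C : uniform positivity of the return probability to `W1`
  set r : ℝ := min r0 δ with hrdef
  have hrpos : 0 < r := lt_min hr0pos hδpos
  obtain ⟨k1, hk1⟩ := h_ii r hrpos
  have hk1pos : 1 ≤ k1 := hforce r k1 (min_le_right _ _) (hk1 y hyK)
  obtain ⟨p1, hp1cont, hp1rep⟩ := h_iii k1 hk1pos
  set W1 : Set (EuclideanSpace ℝ (Fin N)) := Metric.ball wstar r ∩ Dα with hW1
  have hW1meas : MeasurableSet W1 := Metric.isOpen_ball.measurableSet.inter hDmeas
  have hW1K : W1 ⊆ K := fun w hw =>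
    ⟨hballS (Metric.ball_subset_ball ((min_le_right r0 δ).trans hδle) hw.1), hw.2⟩
  have hW1r0 : W1 ⊆ Metric.ball wstar r0 ∩ K := fun w hw =>
    ⟨Metric.ball_subset_ball (min_le_left _ _) hw.1, hW1K hw⟩
  have hclaim : ∀ v ∈ K, ∃ ρ b : ℝ, 0 < ρ ∧ 0 < b ∧
      ∀ v' ∈ Metric.ball v ρ ∩ K, b ≤ (iterKernel κ k1 v' W1).toReal := by
    intro v hv
    have hPv : 0 < iterKernel κ k1 v W1 := hk1 v hv
    have hrepv := hp1rep v hv W1 hW1meas hW1K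
    have hIv : 0 < ∫ w in W1, p1 v w ∂μD := by
      rw [← hrepv]; exact ENNReal.toReal_pos hPv.ne' (measure_ne_top _ _)
    have hintv : IntegrableOn (p1 v) W1 μD := by
      by_contra h; rw [integral_undef h] at hIv; exact lt_irrefl _ hIv
    obtain ⟨ε, hεpos, C, hCmeas, hCW1, hCpos, hCfin, hClb⟩ :=
      exists_posset hW1meas hintv hIv (hlevel p1 hp1cont v hv W1 hW1meas hW1K)
    have hUC1 := (hKcomp.prod hKcomp).uniformContinuousOn_of_continuous hp1cont
    rw [Metric.uniformContinuousOn_iff] at hUC1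
    obtain ⟨ρ, hρpos, hUC1⟩ := hUC1 (ε/2) (by positivity)
    have hCtR : 0 < (μD C).toReal := ENNReal.toReal_pos hCpos.ne' hCfin.ne
    refine ⟨ρ, (ε/2) * (μD C).toReal, hρpos, by positivity, ?_⟩
    intro v' hv'
    have hv'K : v' ∈ K := hv'.2
    have hlb : ∀ w ∈ C, ε/2 ≤ p1 v' w := by
      intro w hw
      have h1 : ((v', w) : EuclideanSpace ℝ (Fin N) × EuclideanSpace ℝ (Fin N)) ∈ K ×ˢ K :=
        Set.mk_mem_prod hv'K (hW1K (hCW1 hw))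
      have h2 : ((v, w) : EuclideanSpace ℝ (Fin N) × EuclideanSpace ℝ (Fin N)) ∈ K ×ˢ K :=
        Set.mk_mem_prod hv (hW1K (hCW1 hw))
      have hd : dist ((v', w) : EuclideanSpace ℝ (Fin N) × EuclideanSpace ℝ (Fin N)) (v, w)
          < ρ := by
        rw [Prod.dist_eq]; simp only [dist_self]
        exact max_lt (Metric.mem_ball.mp hv'.1) hρpos
      have hlt := hUC1 _ h1 _ h2 hd
      rw [Real.dist_eq] at hlt
      have h3 := hClb w hw
      have h4 := abs_lt.mp hlt
      linarith [h4.1, h4.2]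
    have hrepv' := hp1rep v' hv'K W1 hW1meas hW1K
    have hIv' : 0 < ∫ w in W1, p1 v' w ∂μD := by
      rw [← hrepv']
      exact ENNReal.toReal_pos (hk1 v' hv'K).ne' (measure_ne_top _ _)
    have hintv' : IntegrableOn (p1 v') W1 μD := by
      by_contra h; rw [integral_undef h] at hIv'; exact lt_irrefl _ hIv'
    have hunion : C ∪ (W1 \ C) = W1 := Set.union_diff_cancel hCW1
    have hsplit := setIntegral_union (f := fun w => p1 v' w) (μ := μD)
      disjoint_sdiff_self_right (hW1meas.diff hCmeas) (hintv'.mono_set hCW1)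
      (hintv'.mono_set Set.diff_subset)
    rw [hunion] at hsplit
    have hd2 : 0 ≤ ∫ w in W1 \ C, p1 v' w ∂μD := by
      rw [← hp1rep v' hv'K (W1 \ C) (hW1meas.diff hCmeas)
        (Set.diff_subset.trans hW1K)]
      exact ENNReal.toReal_nonneg
    have hd1 : (ε/2) * (μD C).toReal ≤ ∫ w in C, p1 v' w ∂μD :=
      setIntegral_ge_of_const_le_real hCmeas hCfin.ne hlb (hintv'.mono_set hCW1)
    rw [hrepv']
    linarith [hsplit, hd1, hd2]
  choose! ρ b hρpos hbpos hb using hclaim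
  obtain ⟨t, htK, htcov⟩ := hKcomp.elim_nhds_subcover (fun v => Metric.ball v (ρ v))
    (fun v hv => Metric.ball_mem_nhds v (hρpos v hv))
  have htne : t.Nonempty := by
    rcases Set.mem_iUnion₂.mp (htcov hwK) with ⟨v, hvt, _⟩
    exact ⟨v, hvt⟩
  set β : ℝ := t.inf' htne b with hβdef
  have hβpos : 0 < β := by
    rw [hβdef, Finset.lt_inf'_iff]
    exact fun v hvt => hbpos v (htK v hvt)
  have hβle : ∀ v ∈ K, ENNReal.ofReal β ≤ iterKernel κ k1 v W1 := by
    intro v hv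
    rcases Set.mem_iUnion₂.mp (htcov hv) with ⟨u, hut, hmem⟩
    have h1 : β ≤ (iterKernel κ k1 v W1).toReal :=
      le_trans (Finset.inf'_le b hut) (hb u (htK u hut) v ⟨hmem, hv⟩)
    calc ENNReal.ofReal β ≤ ENNReal.ofReal (iterKernel κ k1 v W1).toReal :=
          ENNReal.ofReal_le_ofReal h1
      _ = iterKernel κ k1 v W1 := ENNReal.ofReal_toReal (measure_ne_top _ _)
  -- Conclusion
  have hAtoRpos : 0 < (μD A).toReal := ENNReal.toReal_pos hApos.ne' hAfin.ne
  obtain ⟨M, hM⟩ := (hKcomp.prod hKcomp).exists_bound_of_continuousOn hp0cont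
  refine ⟨k1 + k0, (c0/2) * β * (μD A).toReal, (μD A)⁻¹ • μD.restrict A, ?_, ?_, ?_, ?_⟩
  · positivity
  · constructor
    rw [Measure.smul_apply, Measure.restrict_apply MeasurableSet.univ, Set.univ_inter,
      smul_eq_mul]
    exact ENNReal.inv_mul_cancel hApos.ne' hAfin.ne
  · rw [Measure.smul_apply, Measure.restrict_apply hKmeas, Set.inter_eq_right.mpr hAK,
      smul_eq_mul]
    exact ENNReal.inv_mul_cancel hApos.ne' hAfin.ne
  · intro B hB v hv
    have hBD : MeasurableSet (B ∩ Dα) := hB.inter hDmeas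
    have hBA_meas : MeasurableSet (B ∩ A) := hB.inter hAmeas
    have hBA_sub : B ∩ A ⊆ B ∩ Dα := Set.inter_subset_inter_right B hADα
    have hBA_fin : μD (B ∩ A) < ⊤ := lt_of_le_of_lt (measure_mono Set.inter_subset_right) hAfin
    have hν : ((μD A)⁻¹ • μD.restrict A) (B ∩ Dα) = (μD A)⁻¹ * μD (B ∩ A) := by
      have hset : (B ∩ Dα) ∩ A = B ∩ A := by
        ext w
        constructor
        · rintro ⟨⟨h1, _⟩, h3⟩; exact ⟨h1, h3⟩
        · rintro ⟨h1, h2⟩; exact ⟨⟨h1, hADα h2⟩, h2⟩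
      rw [Measure.smul_apply, Measure.restrict_apply hBD, hset, smul_eq_mul]
    have hstep3 : ∀ u ∈ W1,
        ENNReal.ofReal (c0/2) * μD (B ∩ A) ≤ iterKernel κ k0 u (B ∩ Dα) := by
      intro u hu
      have huK : u ∈ K := hW1K hu
      have hint : IntegrableOn (p0 u) (B ∩ A) μD := by
        have haesm : AEStronglyMeasurable (p0 u) (μD.restrict (B ∩ A)) :=
          ((hslice p0 hp0cont u huK).mono
            (Set.inter_subset_right.trans hAK)).aestronglyMeasurable hBA_meas
        refine Integrable.mono' (g := fun _ => M)
          (integrableOn_const hBA_fin.ne) haesm ?_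
        refine (ae_restrict_iff' hBA_meas).mpr (Filter.Eventually.of_forall ?_)
        intro w hw
        exact hM (u, w) (Set.mk_mem_prod huK (hAK hw.2))
      have hrep := hp0rep u huK (B ∩ A) hBA_meas (fun w hw => hAK hw.2)
      have hge := setIntegral_ge_of_const_le_real hBA_meas hBA_fin.ne
        (fun w hw => hp0lb u (hW1r0 hu) w hw.2) hint
      have h2 : ENNReal.ofReal ((c0/2) * (μD (B ∩ A)).toReal) ≤
          ENNReal.ofReal (iterKernel κ k0 u (B ∩ A)).toReal :=
        ENNReal.ofReal_le_ofReal (by rw [hrep]; rw [measureReal_def] at hge; linarith [hge])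
      rw [ENNReal.ofReal_mul (by positivity), ENNReal.ofReal_toReal hBA_fin.ne,
        ENNReal.ofReal_toReal (measure_ne_top _ _)] at h2
      exact h2.trans (measure_mono hBA_sub)
    have hCK : iterKernel κ (k1 + k0) v (B ∩ Dα) =
        ∫⁻ u, iterKernel κ k0 u (B ∩ Dα) ∂(iterKernel κ k1 v) := by
      rw [iterKernel_add hκ_meas, Measure.bind_apply hBD (iterKernel_measurable hκ_meas k0).aemeasurable]
    calc ENNReal.ofReal ((c0/2) * β * (μD A).toReal) * (((μD A)⁻¹ • μD.restrict A) (B ∩ Dα))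
        = (ENNReal.ofReal (c0/2) * ENNReal.ofReal β * μD A) * ((μD A)⁻¹ * μD (B ∩ A)) := by
          rw [hν, ENNReal.ofReal_mul (by positivity), ENNReal.ofReal_mul (by positivity),
            ENNReal.ofReal_toReal hAfin.ne]
      _ = (ENNReal.ofReal (c0/2) * μD (B ∩ A)) * ENNReal.ofReal β := by
          rw [show (ENNReal.ofReal (c0/2) * ENNReal.ofReal β * μD A) *
              ((μD A)⁻¹ * μD (B ∩ A)) =
              (ENNReal.ofReal (c0/2) * ENNReal.ofReal β * μD (B ∩ A)) *
              (μD A * (μD A)⁻¹) by ring,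
            ENNReal.mul_inv_cancel hApos.ne' hAfin.ne, mul_one]
          ring
      _ ≤ (ENNReal.ofReal (c0/2) * μD (B ∩ A)) * iterKernel κ k1 v W1 :=
          mul_le_mul_right (hβle v hv) _
      _ = ∫⁻ _ in W1, (ENNReal.ofReal (c0/2) * μD (B ∩ A)) ∂(iterKernel κ k1 v) := by
          rw [setLIntegral_const, mul_comm]
      _ ≤ ∫⁻ u in W1, iterKernel κ k0 u (B ∩ Dα) ∂(iterKernel κ k1 v) :=
          setLIntegral_mono' hW1meas (fun u hu => hstep3 u hu)
      _ ≤ ∫⁻ u, iterKernel κ k0 u (B ∩ Dα) ∂(iterKernel κ k1 v) :=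
          setLIntegral_le_lintegral _ _
      _ = iterKernel κ (k1 + k0) v (B ∩ Dα) := hCK.symm
end
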